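/- arXiv:2510.22862 — 6 statements merged into one kernel-verified Lean document; each statement's English description precedes it below -/
import Mathlib

section
/- Let G = (V,E) be a simple oriented graph on a finite vertex type, and let (a,b) ∈ E. Let G' be the graph obtained from G by flipping the edge (a,b), i.e. replacing (a,b) with (b,a). Then the number of unordered triples of vertices forming a directed 3-cycle in G' equals the corresponding number for G, minus the number of vertices c with (b,c) ∈ E and (c,a) ∈ E, plus the number of vertices c with (a,c) ∈ E and (c,b) ∈ E. -/
/-- The graph obtained by flipping the edge `(a,b)`, i.e. replacing `(a,b)` by `(b,a)`. -/
def Flip {V : Type*} (E : V → V → Prop) (a b : V) : V → V → Prop :=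
  fun i j => (i = b ∧ j = a) ∨ (E i j ∧ ¬ (i = a ∧ j = b))

/-- The number of directed 3-cycles of a graph: the number of unordered 3-element
subsets of `V` whose elements form a directed 3-cycle. -/
noncomputable def NumCycles3 (V : Type*) (E : V → V → Prop) : ℕ :=
  Nat.card {s : Set V // s.ncard = 3 ∧
    ∃ a b c, s = ({a, b, c} : Set V) ∧ E a b ∧ E b c ∧ E c a}

/-!
Split the directed 3-cycles according to whether they contain both `a` and `b`. A triple
missing one of them sees the same edges before and after the flip. In an oriented graph, a
3-cycle through both ends of an edge `(a, b)` must run `a → b → c → a`; so the 3-cycles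
containing `a` and `b` correspond to the `c` with `b → c → a` before the flip, and to the `c`
with `a → c → b` after it.
-/

namespace OrientedGraph

variable {V : Type*}

def IsOriented (F : V → V → Prop) : Prop := ∀ i j, F i j → ¬ F j i

def cycleSets (F : V → V → Prop) : Set (Set V) :=
  {s | s.ncard = 3 ∧ ∃ x y z, s = ({x, y, z} : Set V) ∧ F x y ∧ F y z ∧ F z x}

def cyclesThrough (F : V → V → Prop) (a b : V) : Set (Set V) :=
  (fun c => ({a, b, c} : Set V)) '' {c | F b c ∧ F c a}

theorem numCycles3_eq_ncard_cycleSets (F : V → V → Prop) :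
    NumCycles3 V F = (cycleSets F).ncard :=
  Nat.card_coe_set_eq _

variable {F G : V → V → Prop} {a b : V}

theorem IsOriented.ne (hF : IsOriented F) {x y : V} (hxy : F x y) : x ≠ y := by
  rintro rfl
  exact hF x x hxy hxy

theorem IsOriented.flip {E : V → V → Prop} (hE : IsOriented E) (hab : E a b) :
    IsOriented (Flip E a b) := by
  have := hE.ne hab
  unfold Flip
  grind [IsOriented]

theorem flip_adj_and_adj_iff {E : V → V → Prop} (hE : IsOriented E) (hab : E a b) (c : V) :
    Flip E a b a c ∧ Flip E a b c b ↔ E a c ∧ E c b := by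
  have := hE.ne hab
  unfold Flip
  constructor
  · grind
  · rintro ⟨hac, hcb⟩
    have := hE.ne hac
    have := hE.ne hcb
    grind

theorem injOn_insert_insert (a b : V) :
    Set.InjOn (fun c => ({a, b, c} : Set V)) {a, b}ᶜ := by
  intro c hc c' hc' h
  have : c ∈ ({a, b, c'} : Set V) := by
    rw [← show ({a, b, c} : Set V) = {a, b, c'} from h]
    simp
  simp_all

theorem ncard_cyclesThrough (hF : IsOriented F) :
    (cyclesThrough F a b).ncard = Nat.card {c // F b c ∧ F c a} := by
  refine (((injOn_insert_insert a b).mono ?_).ncard_image).trans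
    (Nat.card_coe_set_eq _).symm
  rintro c ⟨hbc, hca⟩
  simp [hF.ne hca, (hF.ne hbc).symm]

theorem insert_insert_mem_cycleSets (hF : IsOriented F) {x y z : V}
    (hxy : F x y) (hyz : F y z) (hzx : F z x) : ({x, y, z} : Set V) ∈ cycleSets F :=
  ⟨Set.ncard_eq_three.2 ⟨x, y, z, hF.ne hxy, (hF.ne hzx).symm, hF.ne hyz, rfl⟩,
    x, y, z, rfl, hxy, hyz, hzx⟩

theorem mem_cycleSets_congr {s : Set V} (h : ∀ x ∈ s, ∀ y ∈ s, F x y ↔ G x y) :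
    s ∈ cycleSets F ↔ s ∈ cycleSets G := by
  unfold cycleSets
  constructor
  all_goals
    rintro ⟨hs, x, y, z, rfl, hxy, hyz, hzx⟩
    exact ⟨hs, x, y, z, rfl, by simp_all⟩

theorem exists_cycle_from_of_mem {x y z v : V} (hxy : F x y) (hyz : F y z) (hzx : F z x)
    (hv : v ∈ ({x, y, z} : Set V)) :
    ∃ y' z', ({x, y, z} : Set V) = {v, y', z'} ∧ F v y' ∧ F y' z' ∧ F z' v := by
  simp only [Set.mem_insert_iff, Set.mem_singleton_iff] at hv
  rcases hv with rfl | rfl | rfl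
  · exact ⟨y, z, rfl, hxy, hyz, hzx⟩
  · exact ⟨z, x, by grind, hyz, hzx, hxy⟩
  · exact ⟨x, y, by grind, hzx, hxy, hyz⟩

theorem cycleSets_inter_eq_cyclesThrough (hF : IsOriented F) (hab : F a b) :
    cycleSets F ∩ {s | a ∈ s ∧ b ∈ s} = cyclesThrough F a b := by
  ext s
  constructor
  · rintro ⟨⟨-, x, y, z, rfl, hxy, hyz, hzx⟩, ha, hb⟩
    obtain ⟨c, d, hs, hac, hcd, hda⟩ := exists_cycle_from_of_mem hxy hyz hzx ha
    rw [hs] at hb ⊢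
    simp only [Set.mem_insert_iff, Set.mem_singleton_iff] at hb
    rcases hb with rfl | rfl | rfl
    · exact absurd rfl (hF.ne hab)
    · exact ⟨d, ⟨hcd, hda⟩, rfl⟩
    · exact absurd hab (hF _ _ hda)
  · rintro ⟨c, ⟨hbc, hca⟩, rfl⟩
    exact ⟨insert_insert_mem_cycleSets hF hab hbc hca, by simp, by simp⟩

theorem cycleSets_diff_eq_of_agree
    (h : ∀ x y, ¬ (x = a ∧ y = b) → ¬ (x = b ∧ y = a) → (F x y ↔ G x y)) :
    cycleSets F \ {s | a ∈ s ∧ b ∈ s} = cycleSets G \ {s | a ∈ s ∧ b ∈ s} := by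
  ext s
  refine and_congr_left fun hs => mem_cycleSets_congr fun x hx y hy => h x y ?_ ?_
  · rintro ⟨rfl, rfl⟩
    exact hs ⟨hx, hy⟩
  · rintro ⟨rfl, rfl⟩
    exact hs ⟨hy, hx⟩

end OrientedGraph

open OrientedGraph in
theorem stmt2_general {V : Type*} [Fintype V] (E : V → V → Prop)
    (horiented : ∀ i j, E i j → ¬ E j i)
    (a b : V) (hab : E a b) :
    (NumCycles3 V (Flip E a b) : ℤ) =
      (NumCycles3 V E : ℤ)
        - (Nat.card {c : V // E b c ∧ E c a} : ℤ)
        + (Nat.card {c : V // E a c ∧ E c b} : ℤ) := by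
  have hflip : IsOriented (Flip E a b) := IsOriented.flip horiented hab
  have hba : Flip E a b b a := Or.inl ⟨rfl, rfl⟩
  have hpair : {s : Set V | b ∈ s ∧ a ∈ s} = {s | a ∈ s ∧ b ∈ s} := by simp only [and_comm]
  have hrest : cycleSets (Flip E a b) \ {s | a ∈ s ∧ b ∈ s} =
      cycleSets E \ {s | a ∈ s ∧ b ∈ s} :=
    cycleSets_diff_eq_of_agree fun x y h₁ h₂ => by simp [Flip, h₁, h₂]
  have hnew : Nat.card {c // Flip E a b a c ∧ Flip E a b c b} =
      Nat.card {c // E a c ∧ E c b} :=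
    Nat.card_congr (Equiv.subtypeEquivRight (flip_adj_and_adj_iff horiented hab))
  rw [numCycles3_eq_ncard_cycleSets, numCycles3_eq_ncard_cycleSets,
    ← Set.ncard_inter_add_ncard_sdiff_eq_ncard (cycleSets (Flip E a b)) {s | a ∈ s ∧ b ∈ s},
    ← Set.ncard_inter_add_ncard_sdiff_eq_ncard (cycleSets E) {s | a ∈ s ∧ b ∈ s},
    ← hpair, cycleSets_inter_eq_cyclesThrough hflip hba, hpair,
    cycleSets_inter_eq_cyclesThrough horiented hab, hrest,
    ncard_cyclesThrough hflip, ncard_cyclesThrough horiented, hnew]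
  push_cast
  ring

/-- Flipping an edge `(a,b)` of a simple oriented graph changes the number
of directed 3-cycles by subtracting the number of vertices `c` with `(b,c), (c,a) ∈ E`
and adding the number of vertices `c` with `(a,c), (c,b) ∈ E`. -/
theorem stmt2 {V : Type*} [Fintype V] (E : V → V → Prop)
    (hsimple : ∀ i j, E i j → i ≠ j) (horiented : ∀ i j, E i j → ¬ E j i)
    (a b : V) (hab : E a b) :
    (NumCycles3 V (Flip E a b) : ℤ) =
      (NumCycles3 V E : ℤ)
        - (Nat.card {c : V // E b c ∧ E c a} : ℤ)
        + (Nat.card {c : V // E a c ∧ E c b} : ℤ) :=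
  stmt2_general E horiented a b hab
end

section
/- Let G = (V,E) be a simple oriented graph on a finite vertex type and let (a,b) ∈ E. If the number of vertices c with (a,c) ∈ E and (c,b) ∈ E is strictly greater than the number of vertices c with (b,c) ∈ E and (c,a) ∈ E, then flipping the edge (a,b) strictly increases the number of unordered triples of vertices forming a directed 3-cycle. -/
/-!
A 3-set not containing both `a` and `b` spans the same edges before and after the flip, so it is
a 3-cycle in both graphs or in neither. Since `E` is oriented and `E a b`, the 3-cycles through
`a` and `b` are exactly the sets `{a, b, c}` with `b → c → a`; after the flip they are the sets
`{a, b, c}` with `a → c → b`. So the flip changes the number of 3-cycles by exactly the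
difference of the two counts in the hypothesis.
-/

section Cycles3

variable {V : Type*} (E : V → V → Prop)

def cycles3 : Set (Set V) :=
  {s | s.ncard = 3 ∧ ∃ a b c, s = ({a, b, c} : Set V) ∧ E a b ∧ E b c ∧ E c a}

lemma numCycles3_eq_ncard : NumCycles3 V E = (cycles3 E).ncard :=
  Nat.card_coe_set_eq _

variable {E}

lemma mem_cycles3_congr {E' : V → V → Prop} {s : Set V}
    (h : ∀ i ∈ s, ∀ j ∈ s, E i j ↔ E' i j) : s ∈ cycles3 E ↔ s ∈ cycles3 E' := by
  refine and_congr_right fun _ => exists_congr fun p => exists_congr fun q =>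
    exists_congr fun r => and_congr_right fun hs => ?_
  subst hs
  exact and_congr (h _ (by simp) _ (by simp))
    (and_congr (h _ (by simp) _ (by simp)) (h _ (by simp) _ (by simp)))

lemma cycles3_inter_pair_eq_image (hsimple : ∀ i j, E i j → i ≠ j) {a b : V}
    (hab : E a b) (hba : ¬ E b a) :
    cycles3 E ∩ {s | {a, b} ⊆ s} = (fun c => ({a, b, c} : Set V)) '' {c | E b c ∧ E c a} := by
  have hne := hsimple a b hab
  ext s
  constructor
  · rintro ⟨⟨-, p, q, r, rfl, hpq, hqr, hrp⟩, hsub⟩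
    simp only [Set.mem_ofPred_eq, Set.insert_subset_iff, Set.singleton_subset_iff,
      Set.mem_insert_iff, Set.mem_singleton_iff] at hsub
    -- each placement of `a` and `b` among `p, q, r` contradicts `a ≠ b` or `¬ E b a`,
    -- or is a rotation of `a → b → c → a`
    obtain ⟨ha | ha | ha, hb | hb | hb⟩ := hsub <;> subst ha hb <;>
      first
      | exact absurd rfl hne
      | exact absurd ‹_› hba
      | exact ⟨_, ⟨‹_›, ‹_›⟩,
          by ext; simp only [Set.mem_insert_iff, Set.mem_singleton_iff] <;> tauto⟩
  · rintro ⟨c, ⟨hbc, hca⟩, rfl⟩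
    refine ⟨⟨?_, a, b, c, rfl, hab, hbc, hca⟩, by simp [Set.insert_subset_iff]⟩
    exact Set.ncard_eq_three.2 ⟨a, b, c, hne, (hsimple c a hca).symm, hsimple b c hbc, rfl⟩

lemma ncard_cycles3_inter_pair (hsimple : ∀ i j, E i j → i ≠ j) {a b : V}
    (hab : E a b) (hba : ¬ E b a) :
    (cycles3 E ∩ {s | {a, b} ⊆ s}).ncard = Nat.card {c // E b c ∧ E c a} := by
  rw [cycles3_inter_pair_eq_image hsimple hab hba, Set.InjOn.ncard_image]
  · rfl
  rintro c ⟨-, hca⟩ c' ⟨hbc', hca'⟩ hcc'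
  have hc' : c' ∈ ({a, b, c} : Set V) := by simp only at hcc'; simp [hcc']
  obtain rfl | rfl | rfl := hc'
  · exact absurd rfl (hsimple _ _ hca')
  · exact absurd rfl (hsimple _ _ hbc')
  · rfl

end Cycles3

section Flip

variable {V : Type*} {E : V → V → Prop} {a b : V}

lemma flip_iff_of_ne {i j : V} (h₁ : ¬ (i = a ∧ j = b)) (h₂ : ¬ (i = b ∧ j = a)) :
    Flip E a b i j ↔ E i j := by
  simp [Flip, h₁, h₂]

lemma flip_ne_of_ne (hsimple : ∀ i j, E i j → i ≠ j) (hne : a ≠ b) :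
    ∀ i j, Flip E a b i j → i ≠ j := by
  rintro i j (⟨rfl, rfl⟩ | ⟨h, -⟩)
  · exact hne.symm
  · exact hsimple i j h

lemma not_flip (hne : a ≠ b) : ¬ Flip E a b a b := by
  rintro (⟨rfl, -⟩ | ⟨-, h⟩)
  exacts [hne rfl, h ⟨rfl, rfl⟩]

lemma flip_left_and_flip_right_iff (hsimple : ∀ i j, E i j → i ≠ j) (hne : a ≠ b) {c : V} :
    Flip E a b a c ∧ Flip E a b c b ↔ E a c ∧ E c b := by
  simp only [Flip]
  grind

lemma cycles3_flip_sdiff_pair :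
    cycles3 (Flip E a b) \ {s | {a, b} ⊆ s} = cycles3 E \ {s | {a, b} ⊆ s} := by
  ext s
  refine and_congr_left fun hs => mem_cycles3_congr fun i hi j hj => flip_iff_of_ne ?_ ?_ <;>
    rintro ⟨rfl, rfl⟩ <;> exact hs (by simp [Set.insert_subset_iff, hi, hj])

end Flip

/-- If, for an edge `(a,b)` of a simple oriented graph, the number of
vertices `c` with `(a,c), (c,b) ∈ E` strictly exceeds the number of vertices `c` with
`(b,c), (c,a) ∈ E`, then flipping `(a,b)` strictly increases the number of directed
3-cycles. -/
theorem stmt4 {V : Type*} [Fintype V] (E : V → V → Prop)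
    (hsimple : ∀ i j, E i j → i ≠ j) (horiented : ∀ i j, E i j → ¬ E j i)
    (a b : V) (hab : E a b)
    (h : Nat.card {c : V // E b c ∧ E c a} < Nat.card {c : V // E a c ∧ E c b}) :
    NumCycles3 V E < NumCycles3 V (Flip E a b) := by
  have hne := hsimple a b hab
  have hflip : ∀ i j, Flip E a b i j → i ≠ j := flip_ne_of_ne hsimple hne
  have hbefore := ncard_cycles3_inter_pair hsimple hab (horiented a b hab)
  have hafter : (cycles3 (Flip E a b) ∩ {s | {a, b} ⊆ s}).ncard
      = Nat.card {c // E a c ∧ E c b} := by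
    rw [Set.pair_comm, ncard_cycles3_inter_pair hflip (Or.inl ⟨rfl, rfl⟩) (not_flip hne)]
    exact Nat.card_congr
      (Equiv.subtypeEquivRight fun _ => flip_left_and_flip_right_iff hsimple hne)
  rw [numCycles3_eq_ncard, numCycles3_eq_ncard,
    ← Set.ncard_inter_add_ncard_sdiff_eq_ncard (cycles3 E) {s | {a, b} ⊆ s},
    ← Set.ncard_inter_add_ncard_sdiff_eq_ncard (cycles3 (Flip E a b)) {s | {a, b} ⊆ s},
    cycles3_flip_sdiff_pair, hbefore, hafter]
  omega
end

section
/- There exists an FBD-graph with exactly 2046 vertices and exactly 16368 edges: a simple oriented graph on a vertex type of cardinality 2046 whose edge relation has exactly 16368 elements, which contains no directed 3-cycles, and in which every edge is blocked. -/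
/-! Take the Cayley digraph of `ZMod 2046` with arcs `x → x + s` for `s` in
`S = {1, 2, 4, 8, -14, -13, -11, -7}`. A directed 2- or 3-cycle would give two or three
elements of `S` summing to `0`; as integers such sums are nonzero and bounded by `42` in
absolute value, so they stay nonzero modulo `2046`. Every `s ∈ S` is a sum of two elements
of `S` (`2 = 1 + 1`, `4 = 2 + 2`, `8 = 4 + 4`, `1 = 8 - 7`, `-14 = -7 - 7`, `-13 = 1 - 14`,
`-11 = 2 - 13`, `-7 = 4 - 11`), which blocks every arc. There are `2046 · 8 = 16368` arcs. -/

open Finset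

lemma ne_of_forall_not_cycle3 {V : Type*} {E : V → V → Prop}
    (hE : ∀ a b c, ¬ (E a b ∧ E b c ∧ E c a)) {i j : V} (hij : E i j) : i ≠ j := by
  rintro rfl
  exact hE i i i ⟨hij, hij, hij⟩

section Cayley

variable {G : Type*} [AddCommGroup G] (S : Finset G)

structure IsFBDConnectionSet : Prop where
  add_ne_zero : ∀ s ∈ S, ∀ t ∈ S, s + t ≠ 0
  add_add_ne_zero : ∀ s ∈ S, ∀ t ∈ S, ∀ u ∈ S, s + t + u ≠ 0
  exists_sub_mem : ∀ s ∈ S, ∃ t ∈ S, s - t ∈ S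

def cayleyAdj (a b : G) : Prop := b - a ∈ S

def cayleyArcEquiv : {p : G × G // cayleyAdj S p.1 p.2} ≃ G × S where
  toFun p := (p.1.1, ⟨p.1.2 - p.1.1, p.2⟩)
  invFun q := ⟨(q.1, q.1 + q.2), by simp [cayleyAdj]⟩
  left_inv p := by ext <;> simp
  right_inv q := by ext <;> simp

lemma card_cayleyArcs : Nat.card {p : G × G // cayleyAdj S p.1 p.2} = Nat.card G * #S := by
  rw [Nat.card_congr (cayleyArcEquiv S), Nat.card_prod, Nat.card_eq_finsetCard]

variable {S}

lemma cayleyAdj_asymm (hS : IsFBDConnectionSet S) {a b : G} (h : cayleyAdj S a b) :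
    ¬ cayleyAdj S b a := fun h' => hS.add_ne_zero _ h _ h' (by abel)

lemma not_cayleyAdj_cycle3 (hS : IsFBDConnectionSet S) (a b c : G) :
    ¬ (cayleyAdj S a b ∧ cayleyAdj S b c ∧ cayleyAdj S c a) := by
  rintro ⟨hab, hbc, hca⟩
  exact hS.add_add_ne_zero _ hab _ hbc _ hca (by abel)

lemma cayleyAdj_blocked (hS : IsFBDConnectionSet S) {a b : G} (h : cayleyAdj S a b) :
    ∃ c, cayleyAdj S a c ∧ cayleyAdj S c b := by
  obtain ⟨t, ht, hst⟩ := hS.exists_sub_mem _ h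
  refine ⟨b - t, ?_, ?_⟩
  · rwa [cayleyAdj, sub_right_comm]
  · rwa [cayleyAdj, sub_sub_cancel]

end Cayley

section Reduction

variable {n : ℕ} {D : Finset ℤ}

lemma ZMod.intCast_ne_zero_of_abs_lt {x : ℤ} (hx : x ≠ 0) (h : |x| < n) : (x : ZMod n) ≠ 0 :=
  fun h0 => hx (Int.eq_zero_of_abs_lt_dvd ((ZMod.intCast_zmod_eq_zero_iff_dvd x n).mp h0) h)

lemma card_image_intCast (hD : ∀ s ∈ D, 3 * |s| < n) : #(D.image ((↑) : ℤ → ZMod n)) = #D := by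
  refine card_image_of_injOn fun s hs t ht hst => ?_
  rw [ZMod.intCast_eq_intCast_iff_dvd_sub] at hst
  have := Int.eq_zero_of_abs_lt_dvd hst
    (by linarith [abs_sub t s, abs_nonneg s, abs_nonneg t, hD s hs, hD t ht])
  linarith

lemma IsFBDConnectionSet.image_intCast (hD : IsFBDConnectionSet D) (hn : ∀ s ∈ D, 3 * |s| < n) :
    IsFBDConnectionSet (D.image ((↑) : ℤ → ZMod n)) where
  add_ne_zero := by
    simp only [mem_image, forall_exists_index, and_imp, forall_apply_eq_imp_iff₂]
    intro s hs t ht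
    exact_mod_cast ZMod.intCast_ne_zero_of_abs_lt (hD.add_ne_zero s hs t ht)
      (by linarith [abs_add_le s t, abs_nonneg s, abs_nonneg t, hn s hs, hn t ht])
  add_add_ne_zero := by
    simp only [mem_image, forall_exists_index, and_imp, forall_apply_eq_imp_iff₂]
    intro s hs t ht u hu
    exact_mod_cast ZMod.intCast_ne_zero_of_abs_lt (hD.add_add_ne_zero s hs t ht u hu)
      (by linarith [abs_add_three s t u, hn s hs, hn t ht, hn u hu])
  exists_sub_mem := by
    simp only [mem_image, forall_exists_index, and_imp, forall_apply_eq_imp_iff₂,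
      exists_exists_and_eq_and]
    intro s hs
    obtain ⟨t, ht, hst⟩ := hD.exists_sub_mem s hs
    exact ⟨t, ht, s - t, hst, by push_cast; rfl⟩

end Reduction

abbrev fbdConnectionSet : Finset ℤ := {1, 2, 4, 8, -14, -13, -11, -7}

lemma isFBDConnectionSet_fbdConnectionSet : IsFBDConnectionSet fbdConnectionSet where
  add_ne_zero := by decide
  add_add_ne_zero := by decide
  exists_sub_mem := by decide

/-- There exists an FBD-graph with exactly 2046 vertices and exactly 16368
edges: a simple oriented graph on a vertex type of cardinality 2046 whose edge relation
has exactly 16368 elements, with no directed 3-cycles, in which every edge is blocked. -/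
theorem stmt7 :
    ∃ (V : Type) (_ : Fintype V) (E : V → V → Prop),
      Nat.card V = 2046 ∧
      Nat.card {p : V × V // E p.1 p.2} = 16368 ∧
      (∀ i j, E i j → i ≠ j) ∧
      (∀ i j, E i j → ¬ E j i) ∧
      (∀ a b c, ¬ (E a b ∧ E b c ∧ E c a)) ∧
      (∀ a b, E a b → ∃ c, E a c ∧ E c b) := by
  have hbound : ∀ s ∈ fbdConnectionSet, 3 * |s| < (2046 : ℕ) := by decide
  set S := fbdConnectionSet.image ((↑) : ℤ → ZMod 2046)
  have hS : IsFBDConnectionSet S := isFBDConnectionSet_fbdConnectionSet.image_intCast hbound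
  refine ⟨ZMod 2046, inferInstance, cayleyAdj S, Nat.card_zmod 2046, ?_,
    fun _ _ => ne_of_forall_not_cycle3 (not_cayleyAdj_cycle3 hS),
    fun _ _ => cayleyAdj_asymm hS, not_cayleyAdj_cycle3 hS, fun _ _ => cayleyAdj_blocked hS⟩
  rw [card_cayleyArcs, Nat.card_zmod, card_image_intCast hbound]
  rfl
end

section
/- There is no complete FBD-graph: if G = (V,E) is a simple oriented graph on a finite vertex type with at least 2 vertices such that for all distinct vertices i, j exactly one of (i,j) ∈ E or (j,i) ∈ E holds (i.e. G is a tournament), and G has no directed 3-cycles, then G has an unblocked edge; in particular G is not an FBD-graph. -/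
/-!
A tournament without directed 3-cycles is transitive, hence a strict order on a finite set, hence
well-founded. Given any edge `a → b`, an `E`-minimal out-neighbour `c` of `a` exists, and the edge
`a → c` is unblocked: a vertex `d` with `a → d → c` would be an out-neighbour of `a` below `c`.
-/

theorem WellFounded.exists_unblocked_edge {V : Type*} {E : V → V → Prop} (hwf : WellFounded E)
    {a b : V} (hab : E a b) : ∃ c, E a c ∧ ¬ ∃ d, E a d ∧ E d c := by
  obtain ⟨c, hac, hmin⟩ := hwf.has_min {c | E a c} ⟨b, hab⟩
  exact ⟨c, hac, fun ⟨d, had, hdc⟩ => hmin d had hdc⟩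

theorem trans_of_tournament_of_no_three_cycle {V : Type*} {E : V → V → Prop}
    (horiented : ∀ i j, E i j → ¬ E j i) (htournament : ∀ i j : V, i ≠ j → E i j ∨ E j i)
    (hnc : ∀ a b c, ¬ (E a b ∧ E b c ∧ E c a)) {a b c : V} (hab : E a b) (hbc : E b c) :
    E a c := by
  have hac : a ≠ c := by
    rintro rfl
    exact horiented a b hab hbc
  exact (htournament a c hac).resolve_right fun hca => hnc a b c ⟨hab, hbc, hca⟩

theorem exists_edge_of_tournament {V : Type*} [Finite V] {E : V → V → Prop}
    (hcard : 2 ≤ Nat.card V) (htournament : ∀ i j : V, i ≠ j → E i j ∨ E j i) :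
    ∃ a b, E a b := by
  have : Nontrivial V := Finite.one_lt_card_iff_nontrivial.mp hcard
  obtain ⟨x, y, hxy⟩ := exists_pair_ne V
  rcases htournament x y hxy with h | h
  exacts [⟨x, y, h⟩, ⟨y, x, h⟩]

theorem stmt10_general {V : Type*} [Fintype V] (E : V → V → Prop)
    (hcard : 2 ≤ Nat.card V)
    (horiented : ∀ i j, E i j → ¬ E j i)
    (htournament : ∀ i j : V, i ≠ j → E i j ∨ E j i)
    (hnc : ∀ a b c, ¬ (E a b ∧ E b c ∧ E c a)) :
    (∃ a b, E a b ∧ ¬ ∃ c, E a c ∧ E c b) ∧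
    ¬ (∀ a b, E a b → ∃ c, E a c ∧ E c b) := by
  have : IsTrans V E :=
    ⟨fun _ _ _ => trans_of_tournament_of_no_three_cycle horiented htournament hnc⟩
  have : Std.Irrefl E := ⟨fun a haa => horiented a a haa haa⟩
  obtain ⟨a, b, hab⟩ := exists_edge_of_tournament hcard htournament
  obtain ⟨c, hac, hunblocked⟩ :=
    (Finite.wellFounded_of_trans_of_irrefl E).exists_unblocked_edge hab
  exact ⟨⟨a, c, hac, hunblocked⟩, fun hblocked => hunblocked (hblocked a c hac)⟩

/-- There is no complete FBD-graph. If `G = (V,E)` is a simple oriented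
graph on a finite vertex type with at least 2 vertices which is a tournament (for all
distinct `i, j` exactly one of `(i,j) ∈ E`, `(j,i) ∈ E` holds) and has no directed
3-cycles, then `G` has an unblocked edge; in particular not every edge of `G` is
blocked, so `G` is not an FBD-graph. -/
theorem stmt10 {V : Type*} [Fintype V] (E : V → V → Prop)
    (hcard : 2 ≤ Nat.card V)
    (hsimple : ∀ i j, E i j → i ≠ j) (horiented : ∀ i j, E i j → ¬ E j i)
    (htournament : ∀ i j : V, i ≠ j → E i j ∨ E j i)
    (hnc : ∀ a b c, ¬ (E a b ∧ E b c ∧ E c a)) :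
    (∃ a b, E a b ∧ ¬ ∃ c, E a c ∧ E c b) ∧
    ¬ (∀ a b, E a b → ∃ c, E a c ∧ E c b) :=
  stmt10_general E hcard horiented htournament hnc
end

section
/- Let G = (V,E) be a simple oriented graph on a finite vertex type, and for each edge e ∈ E let α(e) denote the number of 3-cliques containing e, i.e. the number of unordered 3-element subsets of V containing both endpoints of e whose elements pairwise span edges of E. If G is an FBD-graph, then the sum of α(e) over all edges e ∈ E is at least 3 times the number of edges of G; equivalently, the number of 3-cliques of G is at least the number of edges of G. -/
/-!
If the edge `(a, b)` is blocked by `c`, then `{a, b, c}` is a triangle in which `a` beats the two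
other vertices and `b` is beaten by them; by asymmetry these roles single out `a` and `b`, so
`(a, b) ↦ {a, b, c}` injects edges into triangles. Counting incidences between edges and triangles
gives `∑ α(e) = ∑_T #(edges inside T) ≥ 3 · #triangles ≥ 3 · #edges`.
-/

/-- `a`, `b`, `c` form a 3-clique: each of the three pairs among them spans an edge of
`E` in some direction. -/
def Clique3 {V : Type*} (E : V → V → Prop) (a b c : V) : Prop :=
  (E a b ∨ E b a) ∧ (E b c ∨ E c b) ∧ (E a c ∨ E c a)

open Finset

section

variable {V : Type*} {E : V → V → Prop}

def IsTriangle (E : V → V → Prop) (s : Set V) : Prop :=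
  s.ncard = 3 ∧ ∃ x y z, s = ({x, y, z} : Set V) ∧ Clique3 E x y z

lemma IsTriangle.pairwise {s : Set V} (hs : IsTriangle E s) :
    s.Pairwise fun u v => E u v ∨ E v u := by
  obtain ⟨-, x, y, z, rfl, hxy, hyz, hxz⟩ := hs
  rintro u (rfl | rfl | rfl) v (rfl | rfl | rfl) huv <;> tauto

lemma three_le_card_of_forall_edge_mem [DecidableEq V] (F : Finset (V × V)) {s : Set V}
    (hs : s.ncard = 3) (hadj : s.Pairwise fun u v => E u v ∨ E v u)
    (hF : ∀ e : V × V, E e.1 e.2 → e.1 ∈ s → e.2 ∈ s → e ∈ F) :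
    3 ≤ #F := by
  obtain ⟨x, y, z, hxy, hxz, hyz, rfl⟩ := Set.ncard_eq_three.mp hs
  have hsym2 : ∀ u ∈ ({x, y, z} : Set V), ∀ v ∈ ({x, y, z} : Set V), u ≠ v →
      s(u, v) ∈ F.image (fun e => s(e.1, e.2)) := by
    intro u hu v hv huv
    rcases hadj hu hv huv with h | h
    · exact mem_image_of_mem _ (hF (u, v) h hu hv)
    · rw [Sym2.eq_swap]
      exact mem_image_of_mem _ (hF (v, u) h hv hu)
  calc 3 = #{s(x, y), s(y, z), s(x, z)} := by
        rw [card_insert_of_notMem, card_pair] <;> simp [*, eq_comm]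
    _ ≤ #(F.image (fun e => s(e.1, e.2))) := card_le_card (by
        intro e he
        simp only [mem_insert, mem_singleton] at he
        rcases he with rfl | rfl | rfl <;> apply hsym2 <;> simp [*])
    _ ≤ #F := card_image_le

def IsSourceIn (r : V → V → Prop) (s : Set V) (a : V) : Prop :=
  a ∈ s ∧ ∀ y ∈ s, y ≠ a → r a y

lemma IsSourceIn.unique {r : V → V → Prop} (hasym : ∀ i j, r i j → ¬ r j i) {s : Set V}
    {a b : V} (ha : IsSourceIn r s a) (hb : IsSourceIn r s b) : a = b := by
  by_contra hab
  exact hasym a b (ha.2 b hb.1 (Ne.symm hab)) (hb.2 a ha.1 hab)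

lemma isSourceIn_of_transitive {a b c : V} (hab : E a b) (hac : E a c) :
    IsSourceIn E {a, b, c} a :=
  ⟨by simp, by rintro y (rfl | rfl | rfl) hy <;> first | exact absurd rfl hy | assumption⟩

lemma isSourceIn_flip_of_transitive {a b c : V} (hab : E a b) (hcb : E c b) :
    IsSourceIn (flip E) {a, b, c} b :=
  ⟨by simp, by rintro y (rfl | rfl | rfl) hy <;> first | exact absurd rfl hy | assumption⟩

lemma isTriangle_of_transitive (hirrefl : ∀ i j, E i j → i ≠ j) {a b c : V}
    (hab : E a b) (hac : E a c) (hcb : E c b) : IsTriangle E {a, b, c} :=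
  ⟨Set.ncard_eq_three.mpr ⟨a, b, c, hirrefl _ _ hab, hirrefl _ _ hac, (hirrefl _ _ hcb).symm, rfl⟩,
    a, b, c, rfl, Or.inl hab, Or.inr hcb, Or.inl hac⟩

variable [Fintype V] [DecidableRel E]

lemma card_edges_le_card_triangles (hasym : ∀ i j, E i j → ¬ E j i)
    (hblocked : ∀ a b, E a b → ∃ c, E a c ∧ E c b) :
    #{p : V × V | E p.1 p.2} ≤ Nat.card {s : Set V // IsTriangle E s} := by
  choose! c hac hcb using hblocked
  have hirrefl : ∀ i j, E i j → i ≠ j := fun i j h hij => hasym i j h (hij ▸ h)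
  rw [← Fintype.card_subtype, ← Nat.card_eq_fintype_card]
  refine Nat.card_le_card_of_injective
    (fun p => ⟨{p.1.1, p.1.2, c p.1.1 p.1.2},
      isTriangle_of_transitive hirrefl p.2 (hac _ _ p.2) (hcb _ _ p.2)⟩) ?_
  rintro ⟨⟨a, b⟩, hab⟩ ⟨⟨a', b'⟩, hab'⟩ h
  have hs : ({a, b, c a b} : Set V) = {a', b', c a' b'} := congrArg Subtype.val h
  have ha : a = a' := (isSourceIn_of_transitive hab (hac _ _ hab)).unique hasym
    (hs ▸ isSourceIn_of_transitive hab' (hac _ _ hab'))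
  have hb : b = b' := (isSourceIn_flip_of_transitive hab (hcb _ _ hab)).unique
    (fun i j => hasym j i) (hs ▸ isSourceIn_flip_of_transitive hab' (hcb _ _ hab'))
  simp [ha, hb]

lemma three_mul_card_triangles_le_sum :
    3 * Nat.card {s : Set V // IsTriangle E s} ≤
      ∑ e ∈ ({p : V × V | E p.1 p.2} : Finset (V × V)),
        Nat.card {s : Set V // s.ncard = 3 ∧ e.1 ∈ s ∧ e.2 ∈ s ∧
          ∃ x y z, s = ({x, y, z} : Set V) ∧ Clique3 E x y z} := by
  classical
  set T : Finset (Set V) := {s | IsTriangle E s}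
  let r : V × V → Set V → Prop := fun e s => e.1 ∈ s ∧ e.2 ∈ s
  have hcard_T : Nat.card {s : Set V // IsTriangle E s} = #T := by
    rw [Nat.card_eq_fintype_card, Fintype.card_subtype]
  have hcard_above (e : V × V) :
      Nat.card {s : Set V // s.ncard = 3 ∧ e.1 ∈ s ∧ e.2 ∈ s ∧
        ∃ x y z, s = ({x, y, z} : Set V) ∧ Clique3 E x y z} = #(T.bipartiteAbove r e) := by
    rw [bipartiteAbove, filter_filter, ← Fintype.card_subtype, ← Nat.card_eq_fintype_card]
    exact Nat.card_congr (Equiv.subtypeEquivRight fun s => by simp only [IsTriangle, r]; tauto)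
  have hcard_below :
      ∀ s ∈ T, 3 ≤ #(({p : V × V | E p.1 p.2} : Finset _).bipartiteBelow r s) := by
    intro s hmem
    have hs : IsTriangle E s := (mem_filter.mp hmem).2
    exact three_le_card_of_forall_edge_mem _ hs.1 hs.pairwise
      fun e he h1 h2 => by simp [bipartiteBelow, r, he, h1, h2]
  calc 3 * Nat.card {s : Set V // IsTriangle E s} = #T • 3 := by
        rw [hcard_T, smul_eq_mul, mul_comm]
    _ ≤ ∑ s ∈ T, #(({p : V × V | E p.1 p.2} : Finset _).bipartiteBelow r s) :=
        card_nsmul_le_sum _ _ _ hcard_below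
    _ = _ := by
        rw [← sum_card_bipartiteAbove_eq_sum_card_bipartiteBelow]
        exact sum_congr rfl fun e _ => (hcard_above e).symm

end

/-- In an FBD-graph, the sum over all edges `e` of the number `α(e)` of
3-cliques containing `e` (unordered 3-element subsets of `V` containing both endpoints
of `e` whose elements pairwise span edges) is at least 3 times the number of edges;
equivalently, the number of 3-cliques is at least the number of edges. -/
theorem stmt12 {V : Type*} [Fintype V] (E : V → V → Prop) [DecidableRel E]
    (hFBD : Nonempty V ∧
      (∀ i j, E i j → i ≠ j) ∧
      (∀ i j, E i j → ¬ E j i) ∧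
      (∀ a b c, ¬ (E a b ∧ E b c ∧ E c a)) ∧
      (∀ a b, E a b → ∃ c, E a c ∧ E c b)) :
    3 * (Finset.univ.filter (fun p : V × V => E p.1 p.2)).card ≤
      (∑ e ∈ Finset.univ.filter (fun p : V × V => E p.1 p.2),
        Nat.card {s : Set V // s.ncard = 3 ∧ e.1 ∈ s ∧ e.2 ∈ s ∧
          ∃ x y z, s = ({x, y, z} : Set V) ∧ Clique3 E x y z}) ∧
    (Finset.univ.filter (fun p : V × V => E p.1 p.2)).card ≤
      Nat.card {s : Set V // s.ncard = 3 ∧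
        ∃ x y z, s = ({x, y, z} : Set V) ∧ Clique3 E x y z} := by
  obtain ⟨-, -, hasym, -, hblocked⟩ := hFBD
  have hedges := card_edges_le_card_triangles hasym hblocked
  exact ⟨(Nat.mul_le_mul_left 3 hedges).trans three_mul_card_triangles_le_sum, hedges⟩
end

section
/- There exists a simple oriented graph G on a finite vertex type which contains no directed 3-cycles, has at least one edge, and is such that for every edge (a,b) of G, the graph obtained from G by flipping (a,b) (replacing (a,b) with (b,a)) contains at least one directed 3-cycle. -/
/-!
Take the Cayley digraph of `ℤ/15` with connection set `S = {1, 2, 4, 8}`, the powers of `2`.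
A directed triangle would need three elements of `S` summing to `0` modulo `15`, and there
are none. But every `s ∈ S` is `8s + 8s` with `8s ∈ S`, so each edge `a → a + s` has a detour
`a → a + 8s → a + s`, which becomes a directed triangle once the edge is reversed.
-/

section Flip

variable {V : Type*} {E : V → V → Prop} {a b c : V}

theorem flip_swap : Flip E a b b a :=
  Or.inl ⟨rfl, rfl⟩

theorem flip_of_ne {i j : V} (h : E i j) (hne : ¬ (i = a ∧ j = b)) : Flip E a b i j :=
  Or.inr ⟨h, hne⟩

theorem exists_triangle_flip_of_path (hac : E a c) (hcb : E c b) (hca_ne : c ≠ a)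
    (hcb_ne : c ≠ b) :
    ∃ x y z, Flip E a b x y ∧ Flip E a b y z ∧ Flip E a b z x :=
  ⟨b, a, c, flip_swap, flip_of_ne hac fun h => hcb_ne h.2, flip_of_ne hcb fun h => hca_ne h.1⟩

end Flip

def cayleyDigraph {G : Type*} [AddGroup G] (S : Set G) (i j : G) : Prop :=
  j - i ∈ S

namespace cayleyDigraph

variable {G : Type*} [AddCommGroup G] {S : Set G}

theorem ne (h0 : (0 : G) ∉ S) {i j : G} (h : cayleyDigraph S i j) : i ≠ j := by
  rintro rfl
  exact h0 (by simpa [cayleyDigraph] using h)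

theorem not_swap (hS : ∀ s ∈ S, -s ∉ S) {i j : G} (h : cayleyDigraph S i j) :
    ¬ cayleyDigraph S j i := by
  unfold cayleyDigraph at *
  rw [← neg_sub]
  exact hS _ h

theorem not_triangle (hS : ∀ s ∈ S, ∀ t ∈ S, ∀ u ∈ S, s + t + u ≠ 0) (a b c : G) :
    ¬ (cayleyDigraph S a b ∧ cayleyDigraph S b c ∧ cayleyDigraph S c a) := by
  rintro ⟨hab, hbc, hca⟩
  exact hS _ hab _ hbc _ hca (by abel)

theorem exists_triangle_flip (h0 : (0 : G) ∉ S) (hS : ∀ s ∈ S, ∃ t ∈ S, s - t ∈ S) {a b : G}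
    (hab : cayleyDigraph S a b) :
    ∃ x y z, Flip (cayleyDigraph S) a b x y ∧ Flip (cayleyDigraph S) a b y z ∧
      Flip (cayleyDigraph S) a b z x := by
  obtain ⟨t, ht, hst⟩ := hS _ hab
  have hac : cayleyDigraph S a (a + t) := by simpa [cayleyDigraph] using ht
  have hcb : cayleyDigraph S (a + t) b := by
    simpa [cayleyDigraph, sub_sub, add_comm] using hst
  exact exists_triangle_flip_of_path hac hcb (ne h0 hac).symm (ne h0 hcb)

end cayleyDigraph

def powersOfTwoMod15 : Finset (ZMod 15) :=
  {1, 2, 4, 8}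

theorem zero_notMem_powersOfTwoMod15 : (0 : ZMod 15) ∉ powersOfTwoMod15 := by
  decide

theorem neg_notMem_powersOfTwoMod15 : ∀ s ∈ powersOfTwoMod15, -s ∉ powersOfTwoMod15 := by
  decide

theorem add_add_ne_zero_powersOfTwoMod15 :
    ∀ s ∈ powersOfTwoMod15, ∀ t ∈ powersOfTwoMod15, ∀ u ∈ powersOfTwoMod15, s + t + u ≠ 0 := by
  decide

theorem exists_sub_mem_powersOfTwoMod15 :
    ∀ s ∈ powersOfTwoMod15, ∃ t ∈ powersOfTwoMod15, s - t ∈ powersOfTwoMod15 := by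
  decide

/-- There exists a simple oriented graph on a finite vertex type with no
directed 3-cycles and at least one edge such that for every edge `(a,b)`, the graph
obtained by flipping `(a,b)` contains at least one directed 3-cycle. -/
theorem stmt17 :
    ∃ (V : Type) (_ : Fintype V) (E : V → V → Prop),
      (∀ i j, E i j → i ≠ j) ∧
      (∀ i j, E i j → ¬ E j i) ∧
      (∀ a b c, ¬ (E a b ∧ E b c ∧ E c a)) ∧
      (∃ a b, E a b) ∧
      ∀ a b, E a b →
        ∃ x y z, Flip E a b x y ∧ Flip E a b y z ∧ Flip E a b z x := by
  let S : Set (ZMod 15) := powersOfTwoMod15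
  refine ⟨ZMod 15, inferInstance, cayleyDigraph S,
    fun _ _ => cayleyDigraph.ne zero_notMem_powersOfTwoMod15,
    fun _ _ => cayleyDigraph.not_swap neg_notMem_powersOfTwoMod15,
    cayleyDigraph.not_triangle add_add_ne_zero_powersOfTwoMod15,
    ⟨0, 1, Finset.mem_coe.mpr (by decide)⟩,
    fun _ _ => cayleyDigraph.exists_triangle_flip zero_notMem_powersOfTwoMod15
      exists_sub_mem_powersOfTwoMod15⟩
end
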